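/- Let φ be a nonnegative Schwartz function on ℝ², and let p_u(x) = (4πu)^{−1} exp(−‖x‖²/(4u)) for u > 0. Then for every x ∈ ℝ², lim_{T→∞} (1/log T) ∫₀^T ( ∫_{ℝ²} p_u(x−y) φ(y) dy ) du = (1/(4π)) ∫_{ℝ²} φ(y) dy. -/

import Mathlib

open MeasureTheory Real Filter

noncomputable section

lemma gauss_integrable {b : ℝ} (hb : 0 < b) :
    Integrable (fun y : EuclideanSpace ℝ (Fin 2) => Real.exp (-b * ‖y‖ ^ 2)) := by
  have h := (GaussianFourier.integrable_cexp_neg_mul_sq_norm_add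
    (V := EuclideanSpace ℝ (Fin 2)) (b := (b : ℂ)) (by simpa using hb) 0 0).norm
  have he : (fun y : EuclideanSpace ℝ (Fin 2) => Real.exp (-b * ‖y‖ ^ 2))
      = fun y : EuclideanSpace ℝ (Fin 2) =>
        ‖Complex.exp (-(b:ℂ) * (‖y‖:ℂ) ^ 2 + 0 * ((inner ℝ (0 : EuclideanSpace ℝ (Fin 2)) y : ℝ) : ℂ))‖ := by
    funext y
    rw [Complex.norm_exp]
    norm_num
    exact Or.inl (by norm_cast)
  rw [he]
  exact h

lemma gauss_integrable' {u : ℝ} (hu : 0 < u) (x : EuclideanSpace ℝ (Fin 2)) :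
    Integrable (fun y : EuclideanSpace ℝ (Fin 2) =>
      Real.exp (-‖x - y‖ ^ 2 / (4 * u))) := by
  have hb : (0:ℝ) < (4 * u)⁻¹ := by positivity
  have h : Integrable (fun t : EuclideanSpace ℝ (Fin 2) =>
      Real.exp (-(4*u)⁻¹ * ‖x - t‖ ^ 2)) := (gauss_integrable hb).comp_sub_left x
  have he : (fun y : EuclideanSpace ℝ (Fin 2) => Real.exp (-‖x - y‖ ^ 2 / (4 * u)))
      = fun t => Real.exp (-(4*u)⁻¹ * ‖x - t‖ ^ 2) := by
    funext y; congr 1; field_simp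
  rw [he]; exact h

lemma gauss_value {u : ℝ} (hu : 0 < u) (x : EuclideanSpace ℝ (Fin 2)) :
    ∫ y : EuclideanSpace ℝ (Fin 2), Real.exp (-‖x - y‖ ^ 2 / (4 * u)) = 4 * π * u := by
  have hb : (0:ℝ) < (4 * u)⁻¹ := by positivity
  have h1 : (fun y : EuclideanSpace ℝ (Fin 2) => Real.exp (-‖x - y‖ ^ 2 / (4 * u)))
      = fun y => Real.exp (-(4*u)⁻¹ * ‖x - y‖ ^ 2) := by
    funext y; congr 1; field_simp
  have h2 := integral_sub_left_eq_self
    (fun z : EuclideanSpace ℝ (Fin 2) => Real.exp (-(4*u)⁻¹ * ‖z‖ ^ 2)) volume x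
  rw [h1, h2, GaussianFourier.integral_rexp_neg_mul_sq_norm hb]
  have h3 : (Module.finrank ℝ (EuclideanSpace ℝ (Fin 2)) / 2 : ℝ) = 1 := by
    simp [finrank_euclideanSpace_fin]
  rw [h3, Real.rpow_one]
  have hu' : u ≠ 0 := ne_of_gt hu
  field_simp

lemma F_stronglyMeasurable (φ : SchwartzMap (EuclideanSpace ℝ (Fin 2)) ℝ)
    (x : EuclideanSpace ℝ (Fin 2)) :
    StronglyMeasurable (fun u : ℝ => ∫ y : EuclideanSpace ℝ (Fin 2),
      (4 * π * u)⁻¹ * Real.exp (-‖x - y‖ ^ 2 / (4 * u)) * φ y) := by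
  have hm : Measurable (fun p : ℝ × EuclideanSpace ℝ (Fin 2) =>
      (4 * π * p.1)⁻¹ * Real.exp (-‖x - p.2‖ ^ 2 / (4 * p.1)) * φ p.2) := by
    refine Measurable.mul (Measurable.mul ?_ ?_) ?_
    · exact (measurable_fst.const_mul (4 * π)).inv
    · refine Real.measurable_exp.comp (Measurable.div ?_ ?_)
      · exact ((continuous_const.sub continuous_snd).norm.pow 2).neg.measurable
      · exact measurable_fst.const_mul 4
    · exact φ.continuous.measurable.comp measurable_snd
  exact hm.stronglyMeasurable.integral_prod_right'


set_option maxHeartbeats 1000000 in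
/-- Property (3.42) in the critical case d = α = 2 (planar Brownian motion):
`lim_{T→∞} (1/log T) ∫₀^T T_u φ(x) du = p₁(0) ∫ φ = (1/(4π)) ∫ φ` for every `x`. -/
theorem brownian_semigroup_log_limit (φ : SchwartzMap (EuclideanSpace ℝ (Fin 2)) ℝ)
    (hφ : ∀ y, 0 ≤ φ y) (x : EuclideanSpace ℝ (Fin 2)) :
    Tendsto (fun T : ℝ =>
      (1 / Real.log T) *
        ∫ u in Set.Ioc (0 : ℝ) T, ∫ y : EuclideanSpace ℝ (Fin 2),
          (4 * π * u)⁻¹ * Real.exp (-‖x - y‖ ^ 2 / (4 * u)) * φ y)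
      atTop (nhds ((1 / (4 * π)) * ∫ y : EuclideanSpace ℝ (Fin 2), φ y)) := by
  have hπ : (0:ℝ) < π := Real.pi_pos
  set c : ℝ := ∫ y : EuclideanSpace ℝ (Fin 2), φ y with hcdef
  set F : ℝ → ℝ := fun u => ∫ y : EuclideanSpace ℝ (Fin 2),
      (4 * π * u)⁻¹ * Real.exp (-‖x - y‖ ^ 2 / (4 * u)) * φ y with hFdef
  set c4 : ℝ := 1 / (4 * π) * c with hc4def
  -- bound on φ
  obtain ⟨M, hMpos, hM⟩ := φ.decay 0 0
  have hMbd : ∀ y, ‖φ y‖ ≤ M := by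
    intro y
    have h := hM y
    simpa using h
  have hM0 : 0 ≤ M := le_trans (norm_nonneg _) (hMbd 0)
  -- second moment integrability
  have hKint : Integrable (fun y : EuclideanSpace ℝ (Fin 2) => ‖x - y‖ ^ 2 * φ y) := by
    have h1 : Integrable (fun y : EuclideanSpace ℝ (Fin 2) =>
        2 * ‖x‖ ^ 2 * ‖φ y‖ + 2 * (‖y‖ ^ 2 * ‖φ y‖)) :=
      (φ.integrable.norm.const_mul _).add ((φ.integrable_pow_mul volume 2).const_mul 2)
    refine h1.mono' ?_ (Filter.Eventually.of_forall fun y => ?_)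
    · exact (((continuous_const.sub continuous_id).norm.pow 2).mul
        φ.continuous).aestronglyMeasurable
    · have h2 : ‖x - y‖ ^ 2 ≤ 2 * ‖x‖ ^ 2 + 2 * ‖y‖ ^ 2 := by
        have hxy : ‖x - y‖ ≤ ‖x‖ + ‖y‖ := norm_sub_le _ _
        nlinarith [hxy, sq_nonneg (‖x‖ - ‖y‖), norm_nonneg (x - y), norm_nonneg x, norm_nonneg y]
      rw [Real.norm_eq_abs, abs_mul, abs_of_nonneg (by positivity : (0:ℝ) ≤ ‖x - y‖ ^ 2)]
      calc ‖x - y‖ ^ 2 * |φ y| ≤ (2 * ‖x‖ ^ 2 + 2 * ‖y‖ ^ 2) * |φ y| :=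
            mul_le_mul_of_nonneg_right h2 (abs_nonneg _)
        _ = 2 * ‖x‖ ^ 2 * ‖φ y‖ + 2 * (‖y‖ ^ 2 * ‖φ y‖) := by
            rw [Real.norm_eq_abs]; ring
  set K : ℝ := ∫ y : EuclideanSpace ℝ (Fin 2), ‖x - y‖ ^ 2 * φ y with hKdef
  have hK0 : 0 ≤ K := integral_nonneg fun y => mul_nonneg (by positivity) (hφ y)
  -- integrability of exp * φ
  have hIexpφ : ∀ u : ℝ, 0 < u → Integrable (fun y : EuclideanSpace ℝ (Fin 2) =>
      Real.exp (-‖x - y‖ ^ 2 / (4 * u)) * φ y) := by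
    intro u hu
    refine φ.integrable.norm.mono' ?_ (Filter.Eventually.of_forall fun y => ?_)
    · exact ((Real.continuous_exp.comp
        (((continuous_const.sub continuous_id).norm.pow 2).neg.div_const (4 * u))).mul
        φ.continuous).aestronglyMeasurable
    · have he1 : Real.exp (-‖x - y‖ ^ 2 / (4 * u)) ≤ 1 := by
        apply Real.exp_le_one_iff.2
        have h0 : 0 ≤ ‖x - y‖ ^ 2 / (4 * u) := by positivity
        rw [neg_div]
        linarith
      calc ‖Real.exp (-‖x - y‖ ^ 2 / (4 * u)) * φ y‖
          = Real.exp (-‖x - y‖ ^ 2 / (4 * u)) * ‖φ y‖ := by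
            rw [norm_mul, Real.norm_of_nonneg (Real.exp_nonneg _)]
        _ ≤ 1 * ‖φ y‖ := mul_le_mul_of_nonneg_right he1 (norm_nonneg _)
        _ = ‖φ y‖ := one_mul _
  -- formula for F
  have hFformula : ∀ u : ℝ, 0 < u → F u = (4 * π * u)⁻¹ *
      ∫ y : EuclideanSpace ℝ (Fin 2), Real.exp (-‖x - y‖ ^ 2 / (4 * u)) * φ y := by
    intro u hu
    rw [hFdef]
    simp only [mul_assoc]
    exact integral_const_mul _ _
  -- nonnegativity and upper bound M for F
  have hF0 : ∀ u : ℝ, 0 < u → 0 ≤ F u := by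
    intro u hu
    rw [hFdef]
    refine integral_nonneg fun y => ?_
    have : (0:ℝ) ≤ (4 * π * u)⁻¹ := by positivity
    exact mul_nonneg (mul_nonneg this (Real.exp_nonneg _)) (hφ y)
  have hFle : ∀ u : ℝ, 0 < u → F u ≤ M := by
    intro u hu
    rw [hFformula u hu]
    have hJ : (∫ y : EuclideanSpace ℝ (Fin 2), Real.exp (-‖x - y‖ ^ 2 / (4 * u)) * φ y)
        ≤ 4 * π * u * M := by
      have := integral_mono (hIexpφ u hu) ((gauss_integrable' hu x).mul_const M)
        (fun y => by
          have := hMbd y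
          have h1 : φ y ≤ M := le_trans (le_abs_self _) (by simpa using hMbd y)
          exact mul_le_mul_of_nonneg_left h1 (Real.exp_nonneg _))
      rwa [integral_mul_const, gauss_value hu x] at this
    calc (4 * π * u)⁻¹ * ∫ y : EuclideanSpace ℝ (Fin 2),
          Real.exp (-‖x - y‖ ^ 2 / (4 * u)) * φ y
        ≤ (4 * π * u)⁻¹ * (4 * π * u * M) :=
          mul_le_mul_of_nonneg_left hJ (by positivity)
      _ = M := by
          rw [← mul_assoc, inv_mul_cancel₀ (by positivity), one_mul]
  -- key pointwise estimate for u ≥ 1 (indeed u > 0)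
  have hDiff : ∀ u : ℝ, 0 < u →
      0 ≤ c4 * u⁻¹ - F u ∧ c4 * u⁻¹ - F u ≤ K / (16 * π) * (u⁻¹) ^ 2 := by
    intro u hu
    set J : ℝ := ∫ y : EuclideanSpace ℝ (Fin 2),
        Real.exp (-‖x - y‖ ^ 2 / (4 * u)) * φ y with hJdef
    have hsub : c - J = ∫ y : EuclideanSpace ℝ (Fin 2),
        (φ y - Real.exp (-‖x - y‖ ^ 2 / (4 * u)) * φ y) :=
      (integral_sub φ.integrable (hIexpφ u hu)).symm
    have hlow : 0 ≤ c - J := by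
      rw [hsub]
      refine integral_nonneg fun y => ?_
      simp only [Pi.zero_apply, Pi.sub_apply]
      have he1 : Real.exp (-‖x - y‖ ^ 2 / (4 * u)) ≤ 1 := by
        apply Real.exp_le_one_iff.2
        have h0 : 0 ≤ ‖x - y‖ ^ 2 / (4 * u) := by positivity
        rw [neg_div]; linarith
      nlinarith [hφ y]
    have hupp : c - J ≤ (4 * u)⁻¹ * K := by
      rw [hsub]
      have hint2 : Integrable (fun y : EuclideanSpace ℝ (Fin 2) =>
          (4 * u)⁻¹ * (‖x - y‖ ^ 2 * φ y)) := hKint.const_mul _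
      have hmono := integral_mono (φ.integrable.sub (hIexpφ u hu)) hint2
        (fun y => by
          simp only [Pi.sub_apply]
          have ht0 : 0 ≤ ‖x - y‖ ^ 2 / (4 * u) := by positivity
          have he := Real.add_one_le_exp (-(‖x - y‖ ^ 2 / (4 * u)))
          have harg : -‖x - y‖ ^ 2 / (4 * u) = -(‖x - y‖ ^ 2 / (4 * u)) := neg_div _ _
          rw [harg]
          have hco : (4 * u)⁻¹ * (‖x - y‖ ^ 2 * φ y) = (‖x - y‖ ^ 2 / (4 * u)) * φ y := by
            field_simp
          rw [hco]
          nlinarith [hφ y])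
      rwa [integral_const_mul] at hmono
    have he1 : c4 * u⁻¹ - F u = (4 * π * u)⁻¹ * (c - J) := by
      rw [hFformula u hu, ← hJdef, hc4def]
      have hu' : u ≠ 0 := ne_of_gt hu
      field_simp
      try ring
    constructor
    · rw [he1]; exact mul_nonneg (by positivity) hlow
    · rw [he1]
      calc (4 * π * u)⁻¹ * (c - J) ≤ (4 * π * u)⁻¹ * ((4 * u)⁻¹ * K) :=
            mul_le_mul_of_nonneg_left hupp (by positivity)
        _ = K / (16 * π) * (u⁻¹) ^ 2 := by
            have hu' : u ≠ 0 := ne_of_gt hu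
            rw [div_mul_eq_mul_div, eq_div_iff (by positivity : (16:ℝ) * π ≠ 0)]
            field_simp
            ring
  -- measurability and integrability of F
  have hFmeas : StronglyMeasurable F := F_stronglyMeasurable φ x
  have hFint : ∀ a b : ℝ, 0 ≤ a → IntegrableOn F (Set.Ioc a b) := by
    intro a b ha
    refine Integrable.mono' (g := fun _ => M)
      (integrableOn_const measure_Ioc_lt_top.ne)
      hFmeas.aestronglyMeasurable.restrict ?_
    filter_upwards [ae_restrict_mem measurableSet_Ioc] with u hu
    have hu0 : 0 < u := lt_of_le_of_lt ha hu.1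
    rw [Real.norm_eq_abs, abs_of_nonneg (hF0 u hu0)]
    exact hFle u hu0
  -- the main quantitative estimate
  set A : ℝ := ∫ u in Set.Ioc (0:ℝ) 1, F u with hAdef
  have key : ∀ T : ℝ, 1 ≤ T →
      |(∫ u in Set.Ioc (0:ℝ) T, F u) - c4 * Real.log T - A| ≤ K / (16 * π) := by
    intro T hT
    have hsplit : (∫ u in Set.Ioc (0:ℝ) T, F u)
        = A + ∫ u in Set.Ioc (1:ℝ) T, F u := by
      rw [hAdef, ← setIntegral_union (Set.Ioc_disjoint_Ioc_of_le le_rfl) measurableSet_Ioc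
          (hFint 0 1 le_rfl) (hFint 1 T zero_le_one),
        Set.Ioc_union_Ioc_eq_Ioc zero_le_one hT]
    have h0uIcc : (0:ℝ) ∉ Set.uIcc (1:ℝ) T := by
      rw [Set.uIcc_of_le hT]
      intro h
      have := h.1
      norm_num at this
    have hinv_int : IntegrableOn (fun u : ℝ => u⁻¹) (Set.Ioc (1:ℝ) T) := by
      refine (ContinuousOn.integrableOn_Icc ?_).mono_set Set.Ioc_subset_Icc_self
      exact ContinuousOn.inv₀ continuousOn_id fun u hu =>
        ne_of_gt (lt_of_lt_of_le one_pos hu.1)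
    have hsq_int : IntegrableOn (fun u : ℝ => K / (16 * π) * (u⁻¹) ^ 2)
        (Set.Ioc (1:ℝ) T) := by
      refine (ContinuousOn.integrableOn_Icc ?_).mono_set Set.Ioc_subset_Icc_self
      exact (ContinuousOn.inv₀ continuousOn_id fun u hu =>
        ne_of_gt (lt_of_lt_of_le one_pos hu.1)).pow 2 |>.const_smul (K / (16 * π)) |>.congr
        (fun u _ => by simp [smul_eq_mul])
    have hval : (∫ u in Set.Ioc (1:ℝ) T, c4 * u⁻¹) = c4 * Real.log T := by
      rw [← intervalIntegral.integral_of_le hT, intervalIntegral.integral_const_mul,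
        integral_inv h0uIcc, div_one]
    have hsq_val : (∫ u in Set.Ioc (1:ℝ) T, K / (16 * π) * (u⁻¹) ^ 2) ≤ K / (16 * π) := by
      have hz : (∫ u in (1:ℝ)..T, u ^ (-2 : ℤ)) = 1 - T⁻¹ := by
        rw [integral_zpow (Or.inr ⟨by norm_num, h0uIcc⟩)]
        norm_num
        ring
      have heq : (∫ u in Set.Ioc (1:ℝ) T, K / (16 * π) * (u⁻¹) ^ 2)
          = K / (16 * π) * (1 - T⁻¹) := by
        rw [← intervalIntegral.integral_of_le hT, intervalIntegral.integral_const_mul, ← hz]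
        congr 1
        refine intervalIntegral.integral_congr fun u hu => ?_
        rw [Set.uIcc_of_le hT] at hu
        rw [zpow_neg, zpow_two, mul_inv, pow_two]
      rw [heq]
      have hT' : 0 < T := lt_of_lt_of_le one_pos hT
      have h1 : 0 ≤ T⁻¹ := by positivity
      nlinarith [div_nonneg hK0 (by positivity : (0:ℝ) ≤ 16 * π)]
    have hdint : IntegrableOn (fun u : ℝ => c4 * u⁻¹ - F u) (Set.Ioc (1:ℝ) T) :=
      (hinv_int.const_mul c4).sub (hFint 1 T zero_le_one)
    have hD0 : 0 ≤ ∫ u in Set.Ioc (1:ℝ) T, (c4 * u⁻¹ - F u) :=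
      setIntegral_nonneg measurableSet_Ioc fun u hu => (hDiff u (lt_trans one_pos hu.1)).1
    have hDle : (∫ u in Set.Ioc (1:ℝ) T, (c4 * u⁻¹ - F u)) ≤ K / (16 * π) := by
      refine le_trans (setIntegral_mono_on hdint hsq_int measurableSet_Ioc
        fun u hu => (hDiff u (lt_trans one_pos hu.1)).2) hsq_val
    have hsub2 : (∫ u in Set.Ioc (1:ℝ) T, (c4 * u⁻¹ - F u))
        = c4 * Real.log T - ∫ u in Set.Ioc (1:ℝ) T, F u := by
      rw [integral_sub (hinv_int.const_mul c4) (hFint 1 T zero_le_one), hval]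
    have hrw : (∫ u in Set.Ioc (0:ℝ) T, F u) - c4 * Real.log T - A
        = -(∫ u in Set.Ioc (1:ℝ) T, (c4 * u⁻¹ - F u)) := by
      rw [hsplit, hsub2]; ring
    rw [hrw, abs_neg, abs_of_nonneg hD0]
    exact hDle
  -- conclude by squeezing
  have hB0 : (0:ℝ) ≤ K / (16 * π) + |A| := by positivity
  have hzero : Tendsto (fun T : ℝ =>
      (1 / Real.log T) * (∫ u in Set.Ioc (0:ℝ) T, F u) - c4) atTop (nhds 0) := by
    apply squeeze_zero_norm' (a := fun T : ℝ => (K / (16 * π) + |A|) * (Real.log T)⁻¹)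
    · filter_upwards [eventually_ge_atTop (Real.exp 1)] with T hT
      have hT1 : (1:ℝ) ≤ T := le_trans (by nlinarith [Real.add_one_le_exp (1:ℝ)]) hT
      have hlog1 : 1 ≤ Real.log T := by
        rw [← Real.log_exp 1]
        exact Real.log_le_log (Real.exp_pos 1) hT
      have hlogpos : 0 < Real.log T := lt_of_lt_of_le one_pos hlog1
      have hne : Real.log T ≠ 0 := ne_of_gt hlogpos
      have hident : (1 / Real.log T) * (∫ u in Set.Ioc (0:ℝ) T, F u) - c4
          = (1 / Real.log T) * ((∫ u in Set.Ioc (0:ℝ) T, F u) - c4 * Real.log T) := by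
        field_simp
      rw [Real.norm_eq_abs, hident, abs_mul, abs_of_nonneg
        (by positivity : (0:ℝ) ≤ 1 / Real.log T)]
      have habs : |(∫ u in Set.Ioc (0:ℝ) T, F u) - c4 * Real.log T|
          ≤ K / (16 * π) + |A| := by
        have h1 := key T hT1
        calc |(∫ u in Set.Ioc (0:ℝ) T, F u) - c4 * Real.log T|
            = |((∫ u in Set.Ioc (0:ℝ) T, F u) - c4 * Real.log T - A) + A| := by ring_nf
          _ ≤ |(∫ u in Set.Ioc (0:ℝ) T, F u) - c4 * Real.log T - A| + |A| := abs_add_le _ _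
          _ ≤ K / (16 * π) + |A| := add_le_add_left h1 _
      calc (1 / Real.log T) * |(∫ u in Set.Ioc (0:ℝ) T, F u) - c4 * Real.log T|
          ≤ (1 / Real.log T) * (K / (16 * π) + |A|) :=
            mul_le_mul_of_nonneg_left habs (by positivity)
        _ = (K / (16 * π) + |A|) * (Real.log T)⁻¹ := by
            rw [one_div]; ring
    · have h1 : Tendsto (fun T : ℝ => (Real.log T)⁻¹) atTop (nhds 0) :=
        Real.tendsto_log_atTop.inv_tendsto_atTop
      have := h1.const_mul (K / (16 * π) + |A|)
      simpa using this
  have hfinal := hzero.add (tendsto_const_nhds (x := c4))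
  simp only [sub_add_cancel, zero_add] at hfinal
  exact hfinal

end
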